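/- Let x = Σ_{k=1}^m G(θ_k)c_k with m < n, c_k ≠ 0, θ_k pairwise distinct, and let q ∈ ℂⁿ and Hermitian Y with G(θ)*YG(θ) ≡ 0 satisfy Q(θ_k) := G(θ_k)*q = (c_k/|c_k|)‖G(θ_k)‖ for k = 1,…,m and [[I+Y, q],[q*,1]] ⪰ 0. Then for each k, the vector v_k = (G(θ_k), −u_k*) ∈ ℂ^{n+1}, with u_k = (c_k/|c_k|)‖G(θ_k)‖, lies in the kernel of [[I+Y, q],[q*,1]]; moreover the v_k are linearly independent, so the kernel has dimension at least m and rank[[I+Y,q],[q*,1]] ≤ n + 1 − m. -/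

import Mathlib

/-!
The kernel claim is a quadratic-form computation: with `G = G(θ_k)`, `G* Y G = 0` and the
interpolation condition `G* q = u_k`, the form of `[[I + Y, q], [q*, 1]]` at `v_k` equals
`‖G‖² - |u_k|² = 0`, and a positive semidefinite matrix kills every isotropic vector.
For independence, the `G(θ_k)` are resolvent vectors `(1 - z_k A)⁻¹ b` with distinct `z_k` on the
unit circle: clearing denominators turns a linear relation among them into a polynomial of
degree `< m ≤ n` annihilating `b` through `A`, which reachability forces to vanish, and evaluating
at `z_k⁻¹` isolates each coefficient. The rank bound is then rank–nullity.
-/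

open Matrix
open scoped ComplexOrder

noncomputable def Gv {n : ℕ} (A : Matrix (Fin n) (Fin n) ℂ) (b : Fin n → ℂ) (θ : ℝ) :
    Fin n → ℂ :=
  ((1 : Matrix (Fin n) (Fin n) ℂ) - Complex.exp (-(θ : ℂ) * Complex.I) • A)⁻¹ *ᵥ b

def SchurStable {n : ℕ} (A : Matrix (Fin n) (Fin n) ℂ) : Prop :=
  ∀ z ∈ spectrum ℂ A, ‖z‖ < 1

def Reachable {n : ℕ} (A : Matrix (Fin n) (Fin n) ℂ) (b : Fin n → ℂ) : Prop :=
  Submodule.span ℂ (Set.range fun k : Fin n => (A ^ (k : ℕ)) *ᵥ b) = ⊤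

/-- Euclidean norm on ℂⁿ. -/
noncomputable def enorm {n : ℕ} (v : Fin n → ℂ) : ℝ :=
  Real.sqrt (∑ i, Complex.normSq (v i))

/-- The block matrix [[I + Y, q],[q*, 1]]. -/
def blockD {n : ℕ} (Y : Matrix (Fin n) (Fin n) ℂ) (q : Fin n → ℂ) :
    Matrix (Fin n ⊕ Unit) (Fin n ⊕ Unit) ℂ :=
  Matrix.fromBlocks (1 + Y) (Matrix.of fun i _ => q i)
    (Matrix.of fun _ j => star (q j)) (Matrix.of fun _ _ => (1 : ℂ))

open Polynomial

theorem isUnit_one_sub_smul_of_inv_notMem_spectrum {𝕜 R : Type*} [Field 𝕜] [Ring R]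
    [Algebra 𝕜 R] {a : R} {z : 𝕜} (hz : z ≠ 0) (h : z⁻¹ ∉ spectrum 𝕜 a) :
    IsUnit (1 - z • a) := by
  let u := Units.mk0 z hz
  rw [spectrum.notMem_iff, Algebra.algebraMap_eq_smul_one] at h
  have : IsUnit (u⁻¹ • (1 : R) - a) := by
    rwa [Units.smul_def, Units.val_inv_eq_inv_val, Units.val_mk0]
  rwa [IsUnit.smul_sub_iff_sub_inv_smul, inv_inv u] at this

theorem natDegree_prod_one_sub_C_mul_X_le {R ι : Type*} [CommRing R] (s : Finset ι)
    (z : ι → R) : (∏ j ∈ s, (1 - C (z j) * X)).natDegree ≤ s.card := by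
  refine (natDegree_prod_le _ _).trans ((Finset.sum_le_card_nsmul _ _ 1 fun j _ => ?_).trans ?_)
  · compute_degree
  · simp

section Reachable

variable {n : ℕ} {A : Matrix (Fin n) (Fin n) ℂ} {b : Fin n → ℂ}

theorem SchurStable.isUnit_one_sub_smul (hA : SchurStable A) {z : ℂ} (hz : ‖z‖ = 1) :
    IsUnit (1 - z • A) := by
  have hz0 : z ≠ 0 := norm_ne_zero_iff.mp (by simp [hz])
  refine isUnit_one_sub_smul_of_inv_notMem_spectrum hz0 fun hmem => ?_
  simpa [hz] using hA _ hmem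

theorem Reachable.linearIndependent (h : Reachable A b) :
    LinearIndependent ℂ fun k : Fin n => (A ^ (k : ℕ)) *ᵥ b :=
  linearIndependent_of_top_le_span_of_card_eq_finrank h.ge (by simp)

theorem Reachable.eq_zero_of_aeval_mulVec_eq_zero (h : Reachable A b) {p : ℂ[X]}
    (hp : p.natDegree < n) (hpb : aeval A p *ᵥ b = 0) : p = 0 := by
  have hcoeff : ∀ k : Fin n, p.coeff k = 0 := by
    refine Fintype.linearIndependent_iff.mp h.linearIndependent (fun k => p.coeff k) ?_
    rw [aeval_eq_sum_range' hp, sum_mulVec, Finset.sum_range] at hpb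
    simpa [smul_mulVec] using hpb
  ext k
  rcases lt_or_ge k n with hk | hk
  · simpa using hcoeff ⟨k, hk⟩
  · simpa using coeff_eq_zero_of_natDegree_lt (hp.trans_le hk)

theorem Reachable.linearIndependent_inv_one_sub_smul_mulVec {ι : Type*} [Fintype ι]
    [DecidableEq ι] (h : Reachable A b) (hι : Fintype.card ι ≤ n) {z : ι → ℂ}
    (hz : Function.Injective z) (hz0 : ∀ i, z i ≠ 0) (hunit : ∀ i, IsUnit (1 - z i • A)) :
    LinearIndependent ℂ fun i => (1 - z i • A)⁻¹ *ᵥ b := by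
  rw [Fintype.linearIndependent_iff]
  intro g hg k
  set f : ι → ℂ[X] := fun j => 1 - C (z j) * X
  have hf : ∀ j, aeval A (f j) = 1 - z j • A := fun j => by simp [f, Algebra.smul_def]
  set p : ℂ[X] := ∑ i, C (g i) * ∏ j ∈ Finset.univ.erase i, f j
  have hcofactor : ∀ i, aeval A (∏ j ∈ Finset.univ.erase i, f j) *ᵥ b
      = aeval A (∏ j, f j) *ᵥ ((1 - z i • A)⁻¹ *ᵥ b) := fun i => by
    rw [← Finset.prod_erase_mul _ _ (Finset.mem_univ i), map_mul, hf, mulVec_mulVec,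
      Matrix.mul_assoc, mul_nonsing_inv _ ((isUnit_iff_isUnit_det _).mp (hunit i)),
      Matrix.mul_one]
  have hpb : aeval A p *ᵥ b = 0 := by
    calc aeval A p *ᵥ b = aeval A (∏ j, f j) *ᵥ ∑ i, g i • ((1 - z i • A)⁻¹ *ᵥ b) := by
          simp only [p, map_sum, map_mul, aeval_C, sum_mulVec, mulVec_sum, mulVec_smul,
            ← hcofactor, Algebra.algebraMap_eq_smul_one, smul_mul_assoc, one_mul, smul_mulVec]
      _ = 0 := by rw [hg, mulVec_zero]
  have hdeg : p.natDegree < n := by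
    have : p.natDegree ≤ Fintype.card ι - 1 := natDegree_sum_le_of_forall_le _ _ fun i _ =>
      (natDegree_C_mul_le (g i) _).trans <| (natDegree_prod_one_sub_C_mul_X_le _ z).trans
        (by simp [Finset.card_erase_of_mem])
    have := Fintype.card_pos_iff.mpr ⟨k⟩
    omega
  have hp0 := congrArg (eval (z k)⁻¹) (h.eq_zero_of_aeval_mulVec_eq_zero hdeg hpb)
  have hroot : ∀ j, eval (z k)⁻¹ (f j) = 0 ↔ j = k := fun j => by
    simp [f, sub_eq_zero, eq_comm (a := (1 : ℂ)), mul_inv_eq_one₀ (hz0 k), hz.eq_iff]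
  rw [eval_finsetSum, Finset.sum_eq_single k] at hp0
  · simpa [eval_prod, Finset.prod_eq_zero_iff, hroot] using hp0
  · intro i _ hik
    rw [eval_mul, eval_prod, Finset.prod_eq_zero (Finset.mem_erase.mpr ⟨Ne.symm hik,
      Finset.mem_univ k⟩) ((hroot k).mpr rfl), mul_zero]
  · simp

end Reachable

theorem injOn_cexp_neg_mul_I {a b : ℝ} (h : b - a ≤ 2 * Real.pi) :
    Set.InjOn (fun θ : ℝ => Complex.exp (-(θ : ℂ) * Complex.I)) (Set.Ico a b) := by
  intro x hx y hy hxy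
  refine Circle.exp_injOn_Ico h hx hy (Subtype.ext ?_)
  simpa [Circle.coe_exp, neg_mul, Complex.exp_neg] using hxy

theorem linearIndependent_Gv {n m : ℕ} {A : Matrix (Fin n) (Fin n) ℂ} {b : Fin n → ℂ}
    (hA : SchurStable A) (hreach : Reachable A b) (hm : m ≤ n) {θ : Fin m → ℝ}
    (hθmem : ∀ k, θ k ∈ Set.Ico (0 : ℝ) (2 * Real.pi)) (hθinj : Function.Injective θ) :
    LinearIndependent ℂ fun k => Gv A b (θ k) := by
  have hnorm : ∀ k, ‖Complex.exp (-(θ k : ℂ) * Complex.I)‖ = 1 := fun k => by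
    simpa using Complex.norm_exp_ofReal_mul_I (-θ k)
  refine hreach.linearIndependent_inv_one_sub_smul_mulVec (by simpa using hm)
    (fun i j hij => hθinj (injOn_cexp_neg_mul_I (by simp) (hθmem i) (hθmem j) hij))
    (fun k => Complex.exp_ne_zero _) fun k => hA.isUnit_one_sub_smul (hnorm k)

theorem ofReal_enorm_sq {n : ℕ} (w : Fin n → ℂ) : ((enorm w : ℝ) : ℂ) ^ 2 = star w ⬝ᵥ w := by
  rw [_root_.enorm, ← Complex.ofReal_pow, Real.sq_sqrt (Finset.sum_nonneg fun i _ =>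
    Complex.normSq_nonneg _)]
  simp [dotProduct, Complex.normSq_eq_conj_mul_self]

theorem star_mul_self_phase_mul_ofReal {c : ℂ} (hc : c ≠ 0) (r : ℝ) :
    star (c / ‖c‖ * r) * (c / ‖c‖ * r) = (r : ℂ) ^ 2 := by
  rw [Complex.star_def, Complex.conj_mul']
  simp [hc, ← Complex.ofReal_pow, sq_abs]

theorem star_sumElim_dotProduct_blockD_mulVec {n : ℕ} (Y : Matrix (Fin n) (Fin n) ℂ)
    (q w : Fin n → ℂ) (s : ℂ) :
    star (Sum.elim w fun _ => s) ⬝ᵥ (blockD Y q *ᵥ Sum.elim w fun _ => s)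
      = star w ⬝ᵥ w + star w ⬝ᵥ (Y *ᵥ w) + (star w ⬝ᵥ q) * s + star s * (star q ⬝ᵥ w)
        + star s * s := by
  simp only [blockD, fromBlocks_mulVec, Function.star_sumElim, sumElim_dotProduct_sumElim,
    add_mulVec, one_mulVec, dotProduct_add]
  simp only [dotProduct, mulVec, Pi.star_apply, RCLike.star_def, Function.comp_apply,
    Sum.elim_inl, Sum.elim_inr, of_apply, Finset.univ_unique, PUnit.default_eq_unit,
    Finset.sum_singleton, Finset.mul_sum, Finset.sum_mul, one_mul, mul_assoc]
  ring

theorem blockD_mulVec_eq_zero {n : ℕ} {Y : Matrix (Fin n) (Fin n) ℂ} {q w : Fin n → ℂ} {u : ℂ}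
    (hpsd : (blockD Y q).PosSemidef) (hY : star w ⬝ᵥ (Y *ᵥ w) = 0) (hq : star w ⬝ᵥ q = u)
    (hu : star u * u = star w ⬝ᵥ w) :
    blockD Y q *ᵥ Sum.elim w (fun _ => -star u) = 0 := by
  refine (hpsd.dotProduct_mulVec_zero_iff _).mp ?_
  have hq' : star q ⬝ᵥ w = star u := by rw [star_dotProduct, hq]
  rw [star_sumElim_dotProduct_blockD_mulVec, hY, hq, hq', ← hu, star_neg, star_star]
  ring

theorem LinearIndependent.sumElim_of_left {ι R M α β : Type*} [Semiring R] [AddCommMonoid M]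
    [Module R M] {w : ι → α → M} (hw : LinearIndependent R w) (s : ι → β → M) :
    LinearIndependent R fun i => Sum.elim (w i) (s i) :=
  LinearIndependent.of_comp (LinearMap.funLeft R M Sum.inl) hw

theorem Matrix.rank_add_card_le_of_mulVec_eq_zero {K l ι κ : Type*} [Field K] [Finite l]
    [Fintype ι] [Fintype κ] {M : Matrix l ι K} {v : κ → ι → K} (hv : LinearIndependent K v)
    (hMv : ∀ k, M *ᵥ v k = 0) : M.rank + Fintype.card κ ≤ Fintype.card ι := by
  have hMv' : M * (Matrix.of v)ᵀ = 0 := Matrix.ext fun i k => by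
    simpa [Matrix.mul_apply, mulVec, dotProduct] using congrFun (hMv k) i
  have := rank_add_rank_le_card_of_mul_eq_zero hMv'
  rwa [rank_transpose, LinearIndependent.rank_matrix (M := Matrix.of v) hv] at this

theorem stmt19_general {n m : ℕ} (A : Matrix (Fin n) (Fin n) ℂ) (b : Fin n → ℂ)
    (hA : SchurStable A) (hreach : Reachable A b) (hm : m < n)
    (θ : Fin m → ℝ) (hθmem : ∀ k, θ k ∈ Set.Ico (0 : ℝ) (2 * Real.pi))
    (hθinj : Function.Injective θ)
    (c : Fin m → ℂ) (hc : ∀ k, c k ≠ 0)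
    (q : Fin n → ℂ) (Y : Matrix (Fin n) (Fin n) ℂ)
    (hker : ∀ θ' : ℝ, star (Gv A b θ') ⬝ᵥ (Y *ᵥ Gv A b θ') = 0)
    (hinterp : ∀ k, star (Gv A b (θ k)) ⬝ᵥ q
      = (c k / (‖c k‖ : ℂ)) * (enorm (Gv A b (θ k)) : ℂ))
    (hpsd : (blockD Y q).PosSemidef)
    (u : Fin m → ℂ) (hu : u = fun k => (c k / (‖c k‖ : ℂ)) * (enorm (Gv A b (θ k)) : ℂ))
    (v : Fin m → (Fin n ⊕ Unit → ℂ))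
    (hv : v = fun k => Sum.elim (Gv A b (θ k)) (fun _ => -(star (u k)))) :
    (∀ k, (blockD Y q) *ᵥ v k = 0) ∧ LinearIndependent ℂ v ∧
      (blockD Y q).rank ≤ n + 1 - m := by
  subst hv
  have hkernel : ∀ k, blockD Y q *ᵥ Sum.elim (Gv A b (θ k)) (fun _ => -star (u k)) = 0 :=
    fun k => blockD_mulVec_eq_zero hpsd (hker (θ k)) ((hinterp k).trans (congrFun hu k).symm)
      (by rw [hu, star_mul_self_phase_mul_ofReal (hc k), ofReal_enorm_sq])
  have hindep := (linearIndependent_Gv hA hreach hm.le hθmem hθinj).sumElim_of_left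
    fun k (_ : Unit) => -star (u k)
  have hrank := Matrix.rank_add_card_le_of_mulVec_eq_zero hindep hkernel
  simp only [Fintype.card_sum, Fintype.card_fin, Fintype.card_unit] at hrank
  exact ⟨hkernel, hindep, by omega⟩

theorem stmt19 {n m : ℕ} (A : Matrix (Fin n) (Fin n) ℂ) (b : Fin n → ℂ)
    (hA : SchurStable A) (hreach : Reachable A b) (hm : m < n)
    (θ : Fin m → ℝ) (hθmem : ∀ k, θ k ∈ Set.Ico (0 : ℝ) (2 * Real.pi))
    (hθinj : Function.Injective θ)
    (c : Fin m → ℂ) (hc : ∀ k, c k ≠ 0)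
    (x : Fin n → ℂ) (hx : x = ∑ k, c k • Gv A b (θ k))
    (q : Fin n → ℂ) (Y : Matrix (Fin n) (Fin n) ℂ) (hY : Y.IsHermitian)
    (hker : ∀ θ' : ℝ, star (Gv A b θ') ⬝ᵥ (Y *ᵥ Gv A b θ') = 0)
    (hinterp : ∀ k, star (Gv A b (θ k)) ⬝ᵥ q
      = (c k / (‖c k‖ : ℂ)) * (enorm (Gv A b (θ k)) : ℂ))
    (hpsd : (blockD Y q).PosSemidef)
    (u : Fin m → ℂ) (hu : u = fun k => (c k / (‖c k‖ : ℂ)) * (enorm (Gv A b (θ k)) : ℂ))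
    (v : Fin m → (Fin n ⊕ Unit → ℂ))
    (hv : v = fun k => Sum.elim (Gv A b (θ k)) (fun _ => -(star (u k)))) :
    (∀ k, (blockD Y q) *ᵥ v k = 0) ∧ LinearIndependent ℂ v ∧
      (blockD Y q).rank ≤ n + 1 - m :=
  stmt19_general A b hA hreach hm θ hθmem hθinj c hc q Y hker hinterp hpsd u hu v hv
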